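/- arXiv:1410.0339 — 2 statements merged into one kernel-verified Lean document; each statement's English description precedes it below -/
import Mathlib

section
/- Let A be an n×n complex block shift with superdiagonal blocks A_1, …, A_{k-1}, where A_j is an n_j×n_{j+1} complex matrix, and let A'' be the k×k matrix with (j, j+1) entry equal to m(A_j) (the minimum modulus of A_j) for 1 ≤ j ≤ k-1 and all other entries zero. Then w(A) ≥ w(A''). -/
/-!
Choose vectors `u_j ∈ ℂ^{n_j}` backwards: `u_k` is any unit vector and `u_j` is a unit vector
aligned with `A_j u_{j+1}`, so that `⟨A_j u_{j+1}, u_j⟩ = ‖A_j u_{j+1}‖ ≥ m(A_j)`. The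
contraction `y ↦ ⊕ y_j u_j` compresses `A` to the scalar shift with weights `‖A_j u_{j+1}‖`,
whose numerical radius is therefore at most `w(A)`. Finally, the numerical radius of a scalar
shift is monotone in the moduli of its weights: testing the larger shift on the vector
`(|y_j|)_j` dominates `|⟨A'' y, y⟩|` term by term.
-/

/-- The numerical radius `w(M)` of a square complex matrix, acting on Euclidean space:
`w(M) = sup {|⟨Mx, x⟩| : ‖x‖ = 1}` (here `inner x (M x)` is Mathlib's inner product, conjugate
linear in the first variable, so it equals the paper's `⟨Mx, x⟩`). -/
noncomputable def numRadius {ι : Type*} [Fintype ι] [DecidableEq ι] (M : Matrix ι ι ℂ) : ℝ :=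
  sSup {r : ℝ | ∃ x : EuclideanSpace ℂ ι, ‖x‖ = 1 ∧
    ‖(inner ℂ x (Matrix.toEuclideanLin M x) : ℂ)‖ = r}

/-- The minimum modulus `m(A) = min {‖Ax‖ : ‖x‖ = 1}` of a rectangular complex matrix. -/
noncomputable def minModulus {m n : Type*} [Fintype m] [Fintype n] [DecidableEq n]
    (A : Matrix m n ℂ) : ℝ :=
  sInf {r : ℝ | ∃ x : EuclideanSpace ℂ n, ‖x‖ = 1 ∧ ‖Matrix.toEuclideanLin A x‖ = r}

/-- The `(k+1) × (k+1)` complex matrix with prescribed entries `c 0, …, c (k-1)` on the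
superdiagonal and zeros elsewhere. -/
def superdiagMatrix {k : ℕ} (c : Fin k → ℂ) : Matrix (Fin (k + 1)) (Fin (k + 1)) ℂ :=
  Matrix.of fun i j => if h : (i : ℕ) < k ∧ (j : ℕ) = (i : ℕ) + 1 then c ⟨i, h.1⟩ else 0

/-- The block shift with `k+1` diagonal blocks of sizes `n 0, …, n k` and the rectangular
matrices `B j` (of size `n j × n (j+1)`) in the `(j, j+1)` block positions, zeros elsewhere. -/
noncomputable def blockShiftMatrix {k : ℕ} (n : Fin (k + 1) → ℕ)
    (B : ∀ j : Fin k, Matrix (Fin (n j.castSucc)) (Fin (n j.succ)) ℂ) :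
    Matrix ((j : Fin (k + 1)) × Fin (n j)) ((j : Fin (k + 1)) × Fin (n j)) ℂ :=
  Matrix.of fun p q => ∑ j : Fin k,
    if h : p.1 = j.castSucc ∧ q.1 = j.succ
    then B j (Fin.cast (congrArg n h.1) p.2) (Fin.cast (congrArg n h.2) q.2)
    else 0

open Matrix

lemma inner_toEuclideanLin_eq_sum {m n : Type*} [Fintype m] [Fintype n] [DecidableEq n]
    (M : Matrix m n ℂ) (x : EuclideanSpace ℂ m) (y : EuclideanSpace ℂ n) :
    inner ℂ x (toEuclideanLin M y) = ∑ i, ∑ l, starRingEnd ℂ (x i) * M i l * y l := by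
  simp only [PiLp.inner_apply, toLpLin_apply, mulVec, dotProduct, RCLike.inner_apply,
    Finset.sum_mul]
  exact Finset.sum_congr rfl fun _ _ => Finset.sum_congr rfl fun _ _ => by ring

lemma norm_inner_le_numRadius_mul {ι : Type*} [Fintype ι] [DecidableEq ι] (M : Matrix ι ι ℂ)
    (x : EuclideanSpace ℂ ι) :
    ‖inner ℂ x (toEuclideanLin M x)‖ ≤ numRadius M * ‖x‖ ^ 2 := by
  have hbdd : BddAbove {r : ℝ | ∃ x : EuclideanSpace ℂ ι, ‖x‖ = 1 ∧
      ‖(inner ℂ x (toEuclideanLin M x) : ℂ)‖ = r} := by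
    refine ⟨‖(toEuclideanLin M).toContinuousLinearMap‖, ?_⟩
    rintro r ⟨x, hx, rfl⟩
    simpa [hx] using (norm_inner_le_norm x _).trans
      (mul_le_mul_of_nonneg_left ((toEuclideanLin M).toContinuousLinearMap.le_opNorm x)
        (norm_nonneg x))
  rcases eq_or_ne x 0 with rfl | hx
  · simp
  set z := ((‖x‖⁻¹ : ℝ) : ℂ) • x
  have hz : ‖z‖ = 1 := by simp [z, norm_smul, hx]
  have hxz : x = ((‖x‖ : ℝ) : ℂ) • z := by simp [z, smul_smul, hx]
  have hle : ‖inner ℂ z (toEuclideanLin M z)‖ ≤ numRadius M := le_csSup hbdd ⟨z, hz, rfl⟩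
  rw [hxz, map_smul, inner_smul_left, inner_smul_right, norm_mul, norm_mul]
  simp only [Complex.norm_conj, Complex.norm_real, norm_norm, norm_smul, hz]
  nlinarith [norm_nonneg x]

lemma numRadius_le_numRadius_of_contraction {ι κ : Type*} [Fintype ι] [DecidableEq ι]
    [Fintype κ] [DecidableEq κ] {M : Matrix ι ι ℂ} {A : Matrix κ κ ℂ}
    (V : EuclideanSpace ℂ ι → EuclideanSpace ℂ κ) (hV : ∀ y, ‖V y‖ ≤ ‖y‖)
    (h : ∀ y, ‖inner ℂ y (toEuclideanLin M y)‖ ≤ ‖inner ℂ (V y) (toEuclideanLin A (V y))‖) :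
    numRadius M ≤ numRadius A := by
  have hA : 0 ≤ numRadius A := Real.sSup_nonneg (by rintro r ⟨x, -, rfl⟩; exact norm_nonneg _)
  refine Real.sSup_le ?_ hA
  rintro r ⟨y, hy, rfl⟩
  calc _ ≤ numRadius A * ‖V y‖ ^ 2 := (h y).trans (norm_inner_le_numRadius_mul A (V y))
    _ ≤ numRadius A := mul_le_of_le_one_right hA (pow_le_one₀ (norm_nonneg _) (hy ▸ hV y))

section Superdiag

variable {k : ℕ} (c : Fin k → ℂ)

@[simp]
lemma superdiagMatrix_last_apply (l : Fin (k + 1)) : superdiagMatrix c (Fin.last k) l = 0 := by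
  simp [superdiagMatrix]

@[simp]
lemma superdiagMatrix_castSucc_apply (j : Fin k) (l : Fin (k + 1)) :
    superdiagMatrix c j.castSucc l = if l = j.succ then c j else 0 := by
  simp [superdiagMatrix, Fin.ext_iff]

lemma inner_superdiagMatrix (y : EuclideanSpace ℂ (Fin (k + 1))) :
    inner ℂ y (toEuclideanLin (superdiagMatrix c) y)
      = ∑ j : Fin k, starRingEnd ℂ (y j.castSucc) * c j * y j.succ := by
  simp [inner_toEuclideanLin_eq_sum, Fin.sum_univ_castSucc (fun i => ∑ l, _)]

end Superdiag

lemma EuclideanSpace.norm_toLp_norm {ι : Type*} [Fintype ι] (y : EuclideanSpace ℂ ι) :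
    ‖(WithLp.toLp 2 fun i => (‖y i‖ : ℂ) : EuclideanSpace ℂ ι)‖ = ‖y‖ := by
  simp [EuclideanSpace.norm_eq]

lemma numRadius_superdiagMatrix_le_of_norm_le {k : ℕ} {c : Fin k → ℂ} {d : Fin k → ℝ}
    (h : ∀ j, ‖c j‖ ≤ d j) :
    numRadius (superdiagMatrix c) ≤ numRadius (superdiagMatrix fun j => (d j : ℂ)) := by
  refine numRadius_le_numRadius_of_contraction (fun y => WithLp.toLp 2 fun i => (‖y i‖ : ℂ))
    (fun y => (EuclideanSpace.norm_toLp_norm y).le) fun y => ?_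
  rw [inner_superdiagMatrix, inner_superdiagMatrix]
  calc ‖∑ j : Fin k, starRingEnd ℂ (y j.castSucc) * c j * y j.succ‖
      ≤ ∑ j : Fin k, ‖y j.castSucc‖ * d j * ‖y j.succ‖ := by
        refine (norm_sum_le _ _).trans (Finset.sum_le_sum fun j _ => ?_)
        simp only [norm_mul, Complex.norm_conj]
        gcongr
        exact h j
    _ = ‖((∑ j : Fin k, ‖y j.castSucc‖ * d j * ‖y j.succ‖ : ℝ) : ℂ)‖ := by
        rw [Complex.norm_real, Real.norm_of_nonneg]
        exact Finset.sum_nonneg fun j _ => by have := (norm_nonneg _).trans (h j); positivity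
    _ = _ := by simp

lemma inner_blockShiftMatrix {k : ℕ} (n : Fin (k + 1) → ℕ)
    (B : ∀ j : Fin k, Matrix (Fin (n j.castSucc)) (Fin (n j.succ)) ℂ)
    (x : EuclideanSpace ℂ ((j : Fin (k + 1)) × Fin (n j))) :
    inner ℂ x (toEuclideanLin (blockShiftMatrix n B) x)
      = ∑ j : Fin k, ∑ a, ∑ b, starRingEnd ℂ (x ⟨j.castSucc, a⟩) * B j a b * x ⟨j.succ, b⟩ := by
  simp only [inner_toEuclideanLin_eq_sum, blockShiftMatrix, of_apply, Finset.mul_sum,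
    Finset.sum_mul]
  rw [Finset.sum_congr rfl fun p _ => Finset.sum_comm, Finset.sum_comm]
  refine Finset.sum_congr rfl fun j _ => ?_
  rw [Fintype.sum_sigma, Fintype.sum_eq_single j.castSucc]
  · refine Finset.sum_congr rfl fun a _ => ?_
    rw [Fintype.sum_sigma, Fintype.sum_eq_single j.succ]
    · simp
    · intro i hi
      simp [hi]
  · intro i hi
    simp [hi]

lemma norm_toLp_sigma_le {ι : Type*} [Fintype ι] {κ : ι → Type*} [∀ i, Fintype (κ i)]
    (y : EuclideanSpace ℂ ι) (u : ∀ i, EuclideanSpace ℂ (κ i)) (hu : ∀ i, ‖u i‖ ≤ 1) :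
    ‖(WithLp.toLp 2 fun p : Σ i, κ i => y p.1 * u p.1 p.2 : EuclideanSpace ℂ (Σ i, κ i))‖
      ≤ ‖y‖ := by
  refine le_of_pow_le_pow_left₀ two_ne_zero (norm_nonneg _) ?_
  rw [EuclideanSpace.norm_sq_eq, EuclideanSpace.norm_sq_eq, Fintype.sum_sigma]
  refine Finset.sum_le_sum fun i _ => ?_
  simp only [norm_mul, mul_pow, ← Finset.mul_sum, ← EuclideanSpace.norm_sq_eq]
  exact mul_le_of_le_one_right (by positivity) (pow_le_one₀ (norm_nonneg _) (hu i))

lemma numRadius_superdiagMatrix_inner_le_numRadius_blockShiftMatrix {k : ℕ}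
    {n : Fin (k + 1) → ℕ} (B : ∀ j : Fin k, Matrix (Fin (n j.castSucc)) (Fin (n j.succ)) ℂ)
    (u : ∀ j, EuclideanSpace ℂ (Fin (n j))) (hu : ∀ j, ‖u j‖ ≤ 1) :
    numRadius (superdiagMatrix fun j => inner ℂ (u j.castSucc) (toEuclideanLin (B j) (u j.succ)))
      ≤ numRadius (blockShiftMatrix n B) := by
  refine numRadius_le_numRadius_of_contraction _ (fun y => norm_toLp_sigma_le y u hu)
    fun y => le_of_eq (congrArg norm ?_)
  rw [inner_superdiagMatrix, inner_blockShiftMatrix]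
  simp only [inner_toEuclideanLin_eq_sum, Finset.mul_sum, Finset.sum_mul, map_mul]
  exact Finset.sum_congr rfl fun _ _ => Finset.sum_congr rfl fun _ _ =>
    Finset.sum_congr rfl fun _ _ => by ring

lemma minModulus_nonneg {m n : Type*} [Fintype m] [Fintype n] [DecidableEq n]
    (A : Matrix m n ℂ) : 0 ≤ minModulus A :=
  Real.sInf_nonneg (by rintro r ⟨x, -, rfl⟩; exact norm_nonneg _)

lemma minModulus_le_norm_toEuclideanLin {m n : Type*} [Fintype m] [Fintype n] [DecidableEq n]
    (A : Matrix m n ℂ) {x : EuclideanSpace ℂ n} (hx : ‖x‖ = 1 ∨ IsEmpty n) :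
    minModulus A ≤ ‖toEuclideanLin A x‖ := by
  rcases hx with hx | hn
  · exact csInf_le ⟨0, by rintro r ⟨y, -, rfl⟩; exact norm_nonneg _⟩ ⟨x, hx, rfl⟩
  -- In dimension zero there is no unit vector, and `minModulus A = sInf ∅ = 0`.
  · have hempty : {r : ℝ | ∃ x : EuclideanSpace ℂ n, ‖x‖ = 1 ∧ ‖toEuclideanLin A x‖ = r} = ∅ :=
      Set.eq_empty_of_forall_notMem fun r ⟨y, hy, _⟩ => by simp [Subsingleton.elim y 0] at hy
    rw [minModulus, hempty, Real.sInf_empty]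
    exact norm_nonneg _

lemma exists_norm_eq_one_inner_eq_norm {E : Type*} [NormedAddCommGroup E]
    [InnerProductSpace ℂ E] [Nontrivial E] (w : E) :
    ∃ u : E, ‖u‖ = 1 ∧ inner ℂ u w = ‖w‖ := by
  rcases eq_or_ne w 0 with rfl | hw
  · obtain ⟨v, hv⟩ := exists_norm_eq E zero_le_one
    exact ⟨v, hv, by simp⟩
  · refine ⟨((‖w‖⁻¹ : ℝ) : ℂ) • w, by simp [norm_smul, hw], ?_⟩
    have hw' : (‖w‖ : ℂ) ≠ 0 := by simpa using hw
    rw [inner_smul_left, inner_self_eq_norm_sq_to_K]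
    simp [pow_two, hw']

lemma EuclideanSpace.exists_inner_eq_norm {ι : Type*} [Fintype ι] (w : EuclideanSpace ℂ ι) :
    ∃ u : EuclideanSpace ℂ ι, (‖u‖ = 1 ∨ IsEmpty ι) ∧ inner ℂ u w = ‖w‖ := by
  cases isEmpty_or_nonempty ι with
  | inl hι => exact ⟨0, Or.inr hι, by simp [Subsingleton.elim w 0]⟩
  | inr hι =>
    obtain ⟨u, hu, huw⟩ := exists_norm_eq_one_inner_eq_norm w
    exact ⟨u, Or.inl hu, huw⟩

lemma exists_unit_chain_inner_eq_norm {k : ℕ} (n : Fin (k + 1) → ℕ)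
    (B : ∀ j : Fin k, Matrix (Fin (n j.castSucc)) (Fin (n j.succ)) ℂ) :
    ∃ u : ∀ j, EuclideanSpace ℂ (Fin (n j)), (∀ j, ‖u j‖ = 1 ∨ IsEmpty (Fin (n j))) ∧
      ∀ j : Fin k, inner ℂ (u j.castSucc) (toEuclideanLin (B j) (u j.succ))
        = ‖toEuclideanLin (B j) (u j.succ)‖ := by
  let u : ∀ j, EuclideanSpace ℂ (Fin (n j)) :=
    Fin.reverseInduction (EuclideanSpace.exists_inner_eq_norm 0).choose
      fun j v => (EuclideanSpace.exists_inner_eq_norm (toEuclideanLin (B j) v)).choose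
  have hlast : u (Fin.last k) = (EuclideanSpace.exists_inner_eq_norm 0).choose :=
    Fin.reverseInduction_last
  have hcast : ∀ j : Fin k, u j.castSucc
      = (EuclideanSpace.exists_inner_eq_norm (toEuclideanLin (B j) (u j.succ))).choose :=
    fun j => Fin.reverseInduction_castSucc j
  refine ⟨u, fun j => ?_, fun j => ?_⟩
  · induction j using Fin.lastCases with
    | last => exact hlast ▸ (EuclideanSpace.exists_inner_eq_norm _).choose_spec.1
    | cast j => exact (hcast j) ▸ (EuclideanSpace.exists_inner_eq_norm _).choose_spec.1
  · exact (hcast j) ▸ (EuclideanSpace.exists_inner_eq_norm _).choose_spec.2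

/-- For a block shift `A` with superdiagonal blocks `A_j`, the numerical
radius of `A` is at least that of the scalar shift with superdiagonal entries `m(A_j)`. -/
theorem numRadius_superdiag_minModulus_le_numRadius_blockShift {k : ℕ} (n : Fin (k + 1) → ℕ)
    (B : ∀ j : Fin k, Matrix (Fin (n j.castSucc)) (Fin (n j.succ)) ℂ) :
    numRadius (superdiagMatrix fun j => (minModulus (B j) : ℂ))
      ≤ numRadius (blockShiftMatrix n B) := by
  obtain ⟨u, hunit, hinner⟩ := exists_unit_chain_inner_eq_norm n B
  have hu : ∀ j, ‖u j‖ ≤ 1 := fun j =>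
    (hunit j).elim le_of_eq fun _ => by simp [Subsingleton.elim (u j) 0]
  calc numRadius (superdiagMatrix fun j => (minModulus (B j) : ℂ))
      ≤ numRadius (superdiagMatrix fun j => (‖toEuclideanLin (B j) (u j.succ)‖ : ℂ)) :=
        numRadius_superdiagMatrix_le_of_norm_le fun j => by
          rw [Complex.norm_real, Real.norm_of_nonneg (minModulus_nonneg _)]
          exact minModulus_le_norm_toEuclideanLin _ (hunit j.succ)
    _ = numRadius (superdiagMatrix fun j =>
          inner ℂ (u j.castSucc) (toEuclideanLin (B j) (u j.succ))) := by simp_rw [hinner]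
    _ ≤ numRadius (blockShiftMatrix n B) :=
        numRadius_superdiagMatrix_inner_le_numRadius_blockShiftMatrix B u hu
end

section
/- Let A_1 be an n_1×n_2 complex matrix, let A be the (n_1+n_2)×(n_1+n_2) block matrix [[0, A_1], [0, 0]], and let A''' be the 2×2 matrix [[0, γ(A_1)], [0, 0]], where γ(A_1) is the reduced minimum modulus of A_1. Then w(A) ≥ w(A'''). -/
open Classical in
/-- The reduced minimum modulus `γ(A) = min {‖Ax‖ : ‖x‖ = 1, x ⊥ ker A}` for `A ≠ 0`,
and `γ(0) = 0`. -/
noncomputable def reducedMinModulus {m n : Type*} [Fintype m] [Fintype n] [DecidableEq n]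
    (A : Matrix m n ℂ) : ℝ :=
  if A = 0 then 0 else
    sInf {r : ℝ | ∃ x : EuclideanSpace ℂ n, ‖x‖ = 1 ∧
      x ∈ (LinearMap.ker (Matrix.toEuclideanLin A))ᗮ ∧ ‖Matrix.toEuclideanLin A x‖ = r}

open Matrix

section NumericalRadius

variable {ι : Type*} [Fintype ι] [DecidableEq ι]

lemma bddAbove_numRadius_set (M : Matrix ι ι ℂ) :
    BddAbove {r : ℝ | ∃ x : EuclideanSpace ℂ ι, ‖x‖ = 1 ∧
      ‖(inner ℂ x (toEuclideanLin M x) : ℂ)‖ = r} := by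
  refine ⟨‖LinearMap.toContinuousLinearMap (toEuclideanLin M)‖, ?_⟩
  rintro r ⟨x, hx, rfl⟩
  calc ‖(inner ℂ x (toEuclideanLin M x) : ℂ)‖
      ≤ ‖x‖ * ‖LinearMap.toContinuousLinearMap (toEuclideanLin M) x‖ := norm_inner_le_norm _ _
    _ ≤ ‖LinearMap.toContinuousLinearMap (toEuclideanLin M)‖ := by
      simpa [hx] using (LinearMap.toContinuousLinearMap (toEuclideanLin M)).le_opNorm x

lemma numRadius_nonneg (M : Matrix ι ι ℂ) : 0 ≤ numRadius M :=
  Real.sSup_nonneg (by rintro r ⟨x, -, rfl⟩; exact norm_nonneg _)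

lemma norm_inner_le_numRadius (M : Matrix ι ι ℂ) {x : EuclideanSpace ℂ ι} (hx : ‖x‖ = 1) :
    ‖(inner ℂ x (toEuclideanLin M x) : ℂ)‖ ≤ numRadius M :=
  le_csSup (bddAbove_numRadius_set M) ⟨x, hx, rfl⟩

lemma norm_inner_le_numRadius_mul_norm_sq (M : Matrix ι ι ℂ) (x : EuclideanSpace ℂ ι) :
    ‖(inner ℂ x (toEuclideanLin M x) : ℂ)‖ ≤ numRadius M * ‖x‖ ^ 2 := by
  rcases eq_or_ne x 0 with rfl | hx
  · simp
  have key := norm_inner_le_numRadius M (norm_smul_inv_norm (𝕜 := ℂ) hx)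
  rw [map_smul, inner_smul_left, inner_smul_right, norm_mul, norm_mul] at key
  simp only [RCLike.norm_conj, norm_inv, RCLike.norm_ofReal, abs_norm] at key
  calc _ = ‖x‖⁻¹ * (‖x‖⁻¹ * ‖(inner ℂ x (toEuclideanLin M x) : ℂ)‖) * ‖x‖ ^ 2 := by
        field_simp
    _ ≤ numRadius M * ‖x‖ ^ 2 := by gcongr

lemma numRadius_le {M : Matrix ι ι ℂ} {r : ℝ} (hr : 0 ≤ r)
    (h : ∀ x : EuclideanSpace ℂ ι, ‖x‖ = 1 → ‖(inner ℂ x (toEuclideanLin M x) : ℂ)‖ ≤ r) :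
    numRadius M ≤ r :=
  Real.sSup_le (by rintro _ ⟨x, hx, rfl⟩; exact h x hx) hr

end NumericalRadius

lemma numRadius_superdiag_le (c : ℂ) : numRadius !![0, c; 0, 0] ≤ ‖c‖ / 2 := by
  refine numRadius_le (by positivity) fun x hx => ?_
  have hsum : ‖x 0‖ ^ 2 + ‖x 1‖ ^ 2 = 1 := by
    simpa [Fin.sum_univ_two, hx] using (EuclideanSpace.norm_sq_eq x).symm
  have hinner : (inner ℂ x (toEuclideanLin !![0, c; 0, 0] x) : ℂ) = c * x 1 * star (x 0) := by
    simp [EuclideanSpace.inner_eq_star_dotProduct, toLpLin_apply, dotProduct,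
      Fin.sum_univ_two]
  rw [hinner, norm_mul, norm_mul, norm_star]
  nlinarith [sq_nonneg (‖x 0‖ - ‖x 1‖), norm_nonneg c]

lemma norm_sq_toLp_sumElim {m n : Type*} [Fintype m] [Fintype n] (u : EuclideanSpace ℂ m)
    (v : EuclideanSpace ℂ n) :
    ‖WithLp.toLp 2 (Sum.elim u.ofLp v.ofLp)‖ ^ 2 = ‖u‖ ^ 2 + ‖v‖ ^ 2 := by
  simp [EuclideanSpace.norm_sq_eq, Fintype.sum_sum_type]

section Blocks

variable {m n : Type*} [Fintype m] [Fintype n] [DecidableEq m] [DecidableEq n]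

lemma inner_toEuclideanLin_fromBlocks_zero (B : Matrix m n ℂ) (u : EuclideanSpace ℂ m)
    (v : EuclideanSpace ℂ n) :
    (inner ℂ (WithLp.toLp 2 (Sum.elim u.ofLp v.ofLp))
      (toEuclideanLin (fromBlocks 0 B 0 0) (WithLp.toLp 2 (Sum.elim u.ofLp v.ofLp))) : ℂ)
      = inner ℂ u (toEuclideanLin B v) := by
  simp [PiLp.inner_apply, toLpLin_apply, fromBlocks_mulVec, Fintype.sum_sum_type]

lemma norm_apply_div_two_le_numRadius_fromBlocks (B : Matrix m n ℂ) {v : EuclideanSpace ℂ n}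
    (hv : ‖v‖ = 1) : ‖toEuclideanLin B v‖ / 2 ≤ numRadius (fromBlocks 0 B 0 0) := by
  set w := toEuclideanLin B v
  rcases eq_or_ne w 0 with hw | hw
  · simpa [hw] using numRadius_nonneg _
  set u : EuclideanSpace ℂ m := (‖w‖ : ℂ)⁻¹ • w
  have hu : ‖u‖ = 1 := norm_smul_inv_norm hw
  have huw : ‖(inner ℂ u w : ℂ)‖ = ‖w‖ := by
    rw [inner_smul_left, inner_self_eq_norm_sq_to_K, norm_mul, RCLike.norm_conj]
    simp only [norm_inv, Complex.norm_real, norm_norm, Complex.coe_algebraMap, norm_pow]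
    field_simp
  have key := norm_inner_le_numRadius_mul_norm_sq (fromBlocks 0 B 0 0)
    (WithLp.toLp 2 (Sum.elim u.ofLp v.ofLp))
  rw [inner_toEuclideanLin_fromBlocks_zero, norm_sq_toLp_sumElim, hu, hv, huw] at key
  linarith

end Blocks

section ReducedMinModulus

variable {m n : Type*} [Fintype m] [Fintype n] [DecidableEq n]

lemma reducedMinModulus_zero : reducedMinModulus (0 : Matrix m n ℂ) = 0 := if_pos rfl

lemma reducedMinModulus_nonneg (A : Matrix m n ℂ) : 0 ≤ reducedMinModulus A := by
  unfold reducedMinModulus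
  split_ifs
  · exact le_rfl
  · exact Real.sInf_nonneg (by rintro r ⟨x, -, -, rfl⟩; exact norm_nonneg _)

lemma exists_norm_eq_one_reducedMinModulus_le {A : Matrix m n ℂ} (hA : A ≠ 0) :
    ∃ v : EuclideanSpace ℂ n, ‖v‖ = 1 ∧ reducedMinModulus A ≤ ‖toEuclideanLin A v‖ := by
  have hker : (LinearMap.ker (toEuclideanLin A))ᗮ ≠ ⊥ := by
    rw [Ne, Submodule.orthogonal_eq_bot_iff, LinearMap.ker_eq_top]
    simpa using hA
  obtain ⟨v₀, hv₀, hv₀ne⟩ := Submodule.exists_mem_ne_zero_of_ne_bot hker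
  set v : EuclideanSpace ℂ n := (‖v₀‖ : ℂ)⁻¹ • v₀
  have hv : ‖v‖ = 1 := norm_smul_inv_norm hv₀ne
  refine ⟨v, hv, ?_⟩
  rw [reducedMinModulus, if_neg hA]
  exact csInf_le ⟨0, by rintro r ⟨x, -, -, rfl⟩; exact norm_nonneg _⟩
    ⟨v, hv, Submodule.smul_mem _ _ hv₀, rfl⟩

end ReducedMinModulus

/-- For `A = [[0, A₁], [0, 0]]` and `A''' = [[0, γ(A₁)], [0, 0]]`, one has
`w(A) ≥ w(A''')`. -/
theorem numRadius_superdiag_reducedMinModulus_le_numRadius_two_blocks {n₁ n₂ : ℕ}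
    (A₁ : Matrix (Fin n₁) (Fin n₂) ℂ) :
    numRadius (!![0, (reducedMinModulus A₁ : ℂ); 0, 0])
      ≤ numRadius (Matrix.fromBlocks (0 : Matrix (Fin n₁) (Fin n₁) ℂ) A₁ 0 0) := by
  have hγ := reducedMinModulus_nonneg A₁
  calc numRadius !![0, (reducedMinModulus A₁ : ℂ); 0, 0]
      ≤ reducedMinModulus A₁ / 2 := by
        simpa [abs_of_nonneg hγ] using numRadius_superdiag_le (reducedMinModulus A₁ : ℂ)
    _ ≤ numRadius (fromBlocks 0 A₁ 0 0) := by
        rcases eq_or_ne A₁ 0 with rfl | hA₁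
        · simpa [reducedMinModulus_zero] using numRadius_nonneg _
        obtain ⟨v, hv, hγv⟩ := exists_norm_eq_one_reducedMinModulus_le hA₁
        linarith [norm_apply_div_two_le_numRadius_fromBlocks A₁ hv]
end
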